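/- arXiv:1703.08121 — 2 statements merged into one kernel-verified Lean document; each statement's English description precedes it below -/
import Mathlib

section
/- Let G be a locally compact second countable group acting continuously, properly, and freely on a locally compact second countable Hausdorff space Ω, and suppose the quotient Ω/G is compact. Then there exists a bounded Borel section s : Ω/G → Ω of the quotient map, i.e., a Borel map whose composition with the quotient map is the identity and whose image is contained in a compact subset of Ω. -/
/-!
The quotient map `π` is open and `Ω/G` is compact, so some compact `K` meets every orbit. Fix a
sequence `eₙ` of continuous real functions separating the points of `Ω`. In the compact fibre
`K ∩ π⁻¹{q}` select the lexicographically least point: minimise `e₀`, then `e₁` on the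
minimisers, and so on. The nested compact minimiser sets shrink to a single point `s q`.
For closed `A`, the set of `q` whose `n`-th minimiser set meets `A` is Borel, by induction on
`n`: for `n = 0` it is `π(K ∩ A)`, closed since a proper action has Hausdorff quotient, and at
each later stage meeting `A` is expressed through countably many rational thresholds for `eₙ`.
Intersecting over `n` gives `s⁻¹ A`.
-/

open Set

section MinimiserSets

variable {Ω : Type*} [TopologicalSpace Ω]

theorem IsCompact.setOf_isMinOn {C : Set Ω} {f : Ω → ℝ} (hC : IsCompact C) (hf : Continuous f) :
    IsCompact {x ∈ C | IsMinOn f C x} := by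
  have : {x ∈ C | IsMinOn f C x} = C ∩ ⋂ y ∈ C, f ⁻¹' Iic (f y) := by
    ext x
    simp [isMinOn_iff]
  rw [this]
  exact hC.inter_right (isClosed_biInter fun y _ => isClosed_Iic.preimage hf)

theorem IsCompact.setOf_isMinOn_inter_nonempty_iff {C A : Set Ω} {f : Ω → ℝ} (hC : IsCompact C)
    (hCne : C.Nonempty) (hA : IsClosed A) (hf : Continuous f) :
    ({x ∈ C | IsMinOn f C x} ∩ A).Nonempty ↔
      ∀ r : ℚ, (C ∩ f ⁻¹' Iic (r : ℝ)).Nonempty → (C ∩ (A ∩ f ⁻¹' Iic (r : ℝ))).Nonempty := by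
  constructor
  · rintro ⟨x, ⟨hxC, hxmin⟩, hxA⟩ r ⟨y, hyC, hyr⟩
    exact ⟨x, hxC, hxA, (isMinOn_iff.1 hxmin y hyC).trans hyr⟩
  · intro h
    obtain ⟨x₀, hx₀C, hx₀min⟩ := hC.exists_isMinOn hCne hf.continuousOn
    obtain ⟨r₀, hr₀⟩ := exists_rat_gt (f x₀)
    have hCAne : (C ∩ A).Nonempty := by
      obtain ⟨x, hxC, hxA, -⟩ := h r₀ ⟨x₀, hx₀C, hr₀.le⟩
      exact ⟨x, hxC, hxA⟩
    obtain ⟨y, ⟨hyC, hyA⟩, hymin⟩ :=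
      (hC.inter_right hA).exists_isMinOn hCAne hf.continuousOn
    have hy_le : f y ≤ f x₀ := by
      by_contra! hlt
      obtain ⟨r, hx₀r, hry⟩ := exists_rat_btwn hlt
      obtain ⟨z, hzC, hzA, hzr⟩ := h r ⟨x₀, hx₀C, hx₀r.le⟩
      exact (hry.trans_le (isMinOn_iff.1 hymin z ⟨hzC, hzA⟩)).not_ge hzr
    exact ⟨y, ⟨hyC, isMinOn_iff.2 fun z hz => hy_le.trans (isMinOn_iff.1 hx₀min z hz)⟩, hyA⟩

end MinimiserSets

section LexMin

variable {Ω : Type*}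

def lexMinChain (e : ℕ → Ω → ℝ) (F : Set Ω) : ℕ → Set Ω
  | 0 => F
  | n + 1 => {x ∈ lexMinChain e F n | IsMinOn (e n) (lexMinChain e F n) x}

variable {e : ℕ → Ω → ℝ} {F : Set Ω}

theorem lexMinChain_succ_subset (n : ℕ) : lexMinChain e F (n + 1) ⊆ lexMinChain e F n :=
  sep_subset _ _

theorem lexMinChain_subset : ∀ n, lexMinChain e F n ⊆ F
  | 0 => subset_rfl
  | n + 1 => (lexMinChain_succ_subset n).trans (lexMinChain_subset n)

theorem iInter_lexMinChain_subsingleton (he_sep : ∀ x y, (∀ n, e n x = e n y) → x = y) :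
    (⋂ n, lexMinChain e F n).Subsingleton := by
  intro x hx y hy
  rw [mem_iInter] at hx hy
  exact he_sep x y fun n =>
    le_antisymm (isMinOn_iff.1 (hx (n + 1)).2 y (hy n)) (isMinOn_iff.1 (hy (n + 1)).2 x (hx n))

variable [TopologicalSpace Ω]

theorem isCompact_lexMinChain (hF : IsCompact F) (he : ∀ n, Continuous (e n)) :
    ∀ n, IsCompact (lexMinChain e F n)
  | 0 => hF
  | n + 1 => (isCompact_lexMinChain hF he n).setOf_isMinOn (he n)

theorem lexMinChain_nonempty (hF : IsCompact F) (hFne : F.Nonempty) (he : ∀ n, Continuous (e n)) :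
    ∀ n, (lexMinChain e F n).Nonempty
  | 0 => hFne
  | n + 1 =>
    let ⟨x, hx⟩ := (isCompact_lexMinChain hF he n).exists_isMinOn
      (lexMinChain_nonempty hF hFne he n) (he n).continuousOn
    ⟨x, hx⟩

theorem iInter_lexMinChain_inter_nonempty [T2Space Ω] {A : Set Ω} (hF : IsCompact F)
    (hA : IsClosed A) (he : ∀ n, Continuous (e n))
    (h : ∀ n, (lexMinChain e F n ∩ A).Nonempty) : ((⋂ n, lexMinChain e F n) ∩ A).Nonempty := by
  rw [iInter_inter]
  exact IsCompact.nonempty_iInter_of_sequence_nonempty_isCompact_isClosed _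
    (fun n => inter_subset_inter_left _ (lexMinChain_succ_subset n)) h
    (hF.inter_right hA) fun n => (isCompact_lexMinChain hF he n).isClosed.inter hA

end LexMin

section MeasurableSelection

variable {Q Ω : Type*} [MeasurableSpace Q] [TopologicalSpace Ω]

theorem measurableSet_setOf_lexMinChain_inter_nonempty {e : ℕ → Ω → ℝ}
    (he : ∀ n, Continuous (e n)) {F : Q → Set Ω} (hF : ∀ q, IsCompact (F q))
    (hFne : ∀ q, (F q).Nonempty)
    (hFmeas : ∀ A, IsClosed A → MeasurableSet {q | (F q ∩ A).Nonempty}) (n : ℕ) :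
    ∀ A, IsClosed A → MeasurableSet {q | (lexMinChain e (F q) n ∩ A).Nonempty} := by
  induction n with
  | zero => exact hFmeas
  | succ n ih =>
    intro A hA
    have hlevel : ∀ r : ℚ, IsClosed (e n ⁻¹' Iic (r : ℝ)) := fun r =>
      isClosed_Iic.preimage (he n)
    have : {q | (lexMinChain e (F q) (n + 1) ∩ A).Nonempty} =
        ⋂ r : ℚ, {q | (lexMinChain e (F q) n ∩ e n ⁻¹' Iic (r : ℝ)).Nonempty}ᶜ ∪
          {q | (lexMinChain e (F q) n ∩ (A ∩ e n ⁻¹' Iic (r : ℝ))).Nonempty} := by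
      ext q
      simp only [lexMinChain, mem_ofPred_eq, mem_iInter, mem_union, mem_compl_iff,
        (isCompact_lexMinChain (hF q) he n).setOf_isMinOn_inter_nonempty_iff
          (lexMinChain_nonempty (hF q) (hFne q) he n) hA (he n), imp_iff_not_or]
    rw [this]
    exact .iInter fun r => (ih _ (hlevel r)).compl.union (ih _ (hA.inter (hlevel r)))

theorem exists_measurable_selection [T3Space Ω] [SecondCountableTopology Ω] [MeasurableSpace Ω]
    [BorelSpace Ω] {F : Q → Set Ω} (hF : ∀ q, IsCompact (F q)) (hFne : ∀ q, (F q).Nonempty)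
    (hFmeas : ∀ A, IsClosed A → MeasurableSet {q | (F q ∩ A).Nonempty}) :
    ∃ s : Q → Ω, Measurable s ∧ ∀ q, s q ∈ F q := by
  obtain ⟨f, hf⟩ := TopologicalSpace.exists_embedding_l_infty Ω
  set e : ℕ → Ω → ℝ := fun n x => f x n
  have he : ∀ n, Continuous (e n) := fun n => (continuous_eval_const n).comp hf.continuous
  have he_sep : ∀ x y, (∀ n, e n x = e n y) → x = y := fun x y h =>
    hf.injective (BoundedContinuousFunction.ext h)
  choose s hs using fun q => by
    simpa only [inter_univ] using iInter_lexMinChain_inter_nonempty (hF q) isClosed_univ he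
      fun n => by simpa using lexMinChain_nonempty (hF q) (hFne q) he n
  have hpre : ∀ A, IsClosed A → s ⁻¹' A = ⋂ n, {q | (lexMinChain e (F q) n ∩ A).Nonempty} := by
    intro A hA
    ext q
    simp only [mem_preimage, mem_iInter, mem_ofPred_eq]
    refine ⟨fun hsA n => ⟨s q, mem_iInter.1 (hs q) n, hsA⟩, fun h => ?_⟩
    obtain ⟨x, hx, hxA⟩ := iInter_lexMinChain_inter_nonempty (hF q) hA he h
    rwa [iInter_lexMinChain_subsingleton he_sep hx (hs q)] at hxA
  refine ⟨s, measurable_of_isClosed fun A hA => ?_, fun q =>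
    lexMinChain_subset 0 (iInter_subset _ 0 (hs q))⟩
  rw [hpre A hA]
  exact .iInter fun n => measurableSet_setOf_lexMinChain_inter_nonempty he hF hFne hFmeas n A hA

end MeasurableSelection

instance Quotient.opensMeasurableSpace {X : Type*} [TopologicalSpace X] [MeasurableSpace X]
    [OpensMeasurableSpace X] {r : Setoid X} : OpensMeasurableSpace (Quotient r) :=
  ⟨MeasurableSpace.generateFrom_le fun _ hU => (hU.preimage continuous_quotient_mk').measurableSet⟩

theorem IsOpenMap.exists_isCompact_image_eq_univ {X Y : Type*} [TopologicalSpace X]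
    [WeaklyLocallyCompactSpace X] [TopologicalSpace Y] [CompactSpace Y] {π : X → Y}
    (hπ : IsOpenMap π) (hsurj : Function.Surjective π) :
    ∃ K : Set X, IsCompact K ∧ π '' K = univ := by
  choose N hNc hN using fun y => exists_compact_mem_nhds (Function.surjInv hsurj y)
  obtain ⟨t, ht⟩ := CompactSpace.elim_nhds_subcover (fun y => π '' N y) fun y => by
    simpa only [Function.surjInv_eq hsurj] using hπ.image_mem_nhds (hN y)
  exact ⟨⋃ y ∈ t, N y, t.isCompact_biUnion fun y _ => hNc y, by simpa [image_iUnion] using ht⟩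

theorem exists_measurable_section_of_isCompact_image_eq_univ {Ω Q : Type*} [TopologicalSpace Ω]
    [T3Space Ω] [SecondCountableTopology Ω] [MeasurableSpace Ω] [BorelSpace Ω]
    [TopologicalSpace Q] [T2Space Q] [MeasurableSpace Q] [OpensMeasurableSpace Q] {π : Ω → Q}
    (hπ : Continuous π) {K : Set Ω} (hK : IsCompact K) (hKπ : π '' K = univ) :
    ∃ s : Q → Ω, Measurable s ∧ (∀ q, π (s q) = q) ∧ range s ⊆ K := by
  have hfibre_meas : ∀ A, IsClosed A → MeasurableSet {q | (K ∩ π ⁻¹' {q} ∩ A).Nonempty} := by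
    intro A hA
    have : {q | (K ∩ π ⁻¹' {q} ∩ A).Nonempty} = π '' (K ∩ A) := by
      ext q
      simp only [mem_ofPred_eq, mem_image, Set.Nonempty, mem_inter_iff, mem_preimage,
        mem_singleton_iff]
      tauto
    rw [this]
    exact ((hK.inter_right hA).image hπ).isClosed.measurableSet
  obtain ⟨s, hs, hsF⟩ := exists_measurable_selection
    (fun q => hK.inter_right (isClosed_singleton.preimage hπ))
    (fun q => by
      obtain ⟨x, hxK, rfl⟩ := hKπ.superset (mem_univ q)
      exact ⟨x, hxK, rfl⟩) hfibre_meas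
  exact ⟨s, hs, fun q => (hsF q).2, range_subset_iff.2 fun q => (hsF q).1⟩

theorem stmt_9_general {G Ω : Type*} [Group G] [TopologicalSpace G]
    [TopologicalSpace Ω] [T2Space Ω] [LocallyCompactSpace Ω] [SecondCountableTopology Ω]
    [MeasurableSpace Ω] [BorelSpace Ω]
    [MulAction G Ω]
    (hproper : IsProperMap (fun p : G × Ω => (p.1 • p.2, p.2)))
    [CompactSpace (Quotient (MulAction.orbitRel G Ω))] :
    ∃ s : Quotient (MulAction.orbitRel G Ω) → Ω,
      Measurable s ∧ (∀ x, Quotient.mk'' (s x) = x) ∧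
      ∃ K : Set Ω, IsCompact K ∧ Set.range s ⊆ K := by
  have : ProperSMul G Ω := ⟨hproper⟩
  have hπ : IsOpenQuotientMap (Quotient.mk'' : Ω → Quotient (MulAction.orbitRel G Ω)) :=
    MulAction.isOpenQuotientMap_quotientMk
  obtain ⟨K, hK, hKπ⟩ := hπ.isOpenMap.exists_isCompact_image_eq_univ hπ.surjective
  obtain ⟨s, hs, hsπ, hsK⟩ :=
    exists_measurable_section_of_isCompact_image_eq_univ hπ.continuous hK hKπ
  exact ⟨s, hs, hsπ, K, hK, hsK⟩

/-- If an lcsc group `G` acts continuously, properly and freely on an lcsc Hausdorff space `Ω`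
with compact quotient `Ω/G`, then the quotient map admits a bounded Borel section. -/
theorem stmt_9 {G Ω : Type*} [Group G] [TopologicalSpace G] [IsTopologicalGroup G]
    [LocallyCompactSpace G] [SecondCountableTopology G]
    [TopologicalSpace Ω] [T2Space Ω] [LocallyCompactSpace Ω] [SecondCountableTopology Ω]
    [MeasurableSpace Ω] [BorelSpace Ω]
    [MulAction G Ω] [ContinuousSMul G Ω]
    (hproper : IsProperMap (fun p : G × Ω => (p.1 • p.2, p.2)))
    (hfree : ∀ (g : G) (x : Ω), g • x = x → g = 1)
    [CompactSpace (Quotient (MulAction.orbitRel G Ω))] :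
    ∃ s : Quotient (MulAction.orbitRel G Ω) → Ω,
      Measurable s ∧ (∀ x, Quotient.mk'' (s x) = x) ∧
      ∃ K : Set Ω, IsCompact K ∧ Set.range s ⊆ K :=
  stmt_9_general hproper
end

section
/- Let G be an lcsc group with a measurable measure-preserving action on a standard Borel probability space (X, μ), and let ω_H : G × X → H be a strict measurable cocycle into an lcsc group H which is proper in the following sense: there is a family of Borel sets 𝒜 in X such that (1) for every compact K ⊆ G and A, B ∈ 𝒜 there is a precompact L ⊆ H with ω_H(g, x) ∈ L for all g ∈ K and almost all x ∈ A ∩ g⁻¹.B, and (2) for every ε > 0 there is A ∈ 𝒜 with μ(X∖A) < ε. If π : H → U(𝓗) is a strongly continuous unitary representation with almost invariant vectors, then the induced representation π̃ of G on L²(X, 𝓗), given by (π̃(g)ξ)(x) = π(ω_H(g, g⁻¹.x))ξ(g⁻¹.x), also has almost invariant vectors. -/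
/-!
Take for the almost invariant vector the constant function `ξ`, where `ξ` is almost invariant
under `π` on the precompact set `L` that properness attaches to `K` and a set `A ∈ 𝒜` of
measure close to one. For `g ∈ K` the function `x ↦ π(ω(g, g⁻¹x))ξ - ξ` is small on
`A ∩ g.A`, where the cocycle takes values in `L`, and is bounded by `2` everywhere, while the
measure-preserving action makes `A ∩ g.A` have complement of measure at most `2 μ(Aᶜ)`.
-/

open MeasureTheory Set
open scoped ENNReal

theorem eLpNorm_le_of_ae_bound_on_of_bound {α E : Type*} [MeasurableSpace α]
    [NormedAddCommGroup E] {μ : Measure α} {p : ℝ≥0∞} (hp : 1 ≤ p) {f : α → E} {S : Set α}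
    (hS : MeasurableSet S) {δ C : ℝ} (hδ : 0 ≤ δ) (hC : 0 ≤ C)
    (hfS : ∀ᵐ x ∂μ, x ∈ S → ‖f x‖ ≤ δ) (hf : ∀ x, ‖f x‖ ≤ C) :
    eLpNorm f p μ ≤
      μ univ ^ p.toReal⁻¹ * ENNReal.ofReal δ + ENNReal.ofReal C * μ Sᶜ ^ p.toReal⁻¹ := by
  have hdom : ∀ᵐ x ∂μ, ‖f x‖ ≤ ‖δ + Sᶜ.indicator (fun _ => C) x‖ := by
    filter_upwards [hfS] with x hx
    rw [Real.norm_of_nonneg (add_nonneg hδ (indicator_nonneg (fun _ _ => hC) x))]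
    by_cases hxS : x ∈ S
    · simpa [hxS] using hx hxS
    · simpa [hxS] using (hf x).trans (le_add_of_nonneg_left hδ)
  calc eLpNorm f p μ ≤ eLpNorm (fun x => δ + Sᶜ.indicator (fun _ => C) x) p μ :=
        eLpNorm_mono_ae hdom
    _ ≤ eLpNorm (fun _ => δ) p μ + eLpNorm (Sᶜ.indicator fun _ => C) p μ :=
        eLpNorm_add_le aestronglyMeasurable_const
          (aestronglyMeasurable_const.indicator hS.compl) hp
    _ ≤ μ univ ^ p.toReal⁻¹ * ENNReal.ofReal δ + ENNReal.ofReal C * μ Sᶜ ^ p.toReal⁻¹ := by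
        gcongr
        · exact eLpNorm_le_of_ae_bound (by simp [abs_of_nonneg hδ])
        · simpa [Real.enorm_of_nonneg hC] using eLpNorm_indicator_const_le C p (μ := μ) (s := Sᶜ)

theorem MeasureTheory.MeasurePreserving.measure_compl_inter_preimage_le {X : Type*}
    [MeasurableSpace X] {μ : Measure X} {f : X → X} (hf : MeasurePreserving f μ μ) (A : Set X) :
    μ (A ∩ f ⁻¹' A)ᶜ ≤ 2 * μ Aᶜ :=
  calc μ (A ∩ f ⁻¹' A)ᶜ ≤ μ Aᶜ + μ (f ⁻¹' Aᶜ) := by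
        rw [compl_inter, preimage_compl]; exact measure_union_le _ _
    _ ≤ μ Aᶜ + μ Aᶜ := add_le_add_right (hf.measure_preimage_le _) _
    _ = 2 * μ Aᶜ := (two_mul _).symm

theorem stmt_18_general {G H X 𝓗 : Type*}
    [Group G] [TopologicalSpace G]
    [Group H] [TopologicalSpace H]
    [MeasurableSpace X]
    [NormedAddCommGroup 𝓗] [InnerProductSpace ℂ 𝓗]
    (μ : Measure X) [IsProbabilityMeasure μ]
    [MulAction G X]
    (hmp : ∀ g : G, MeasurePreserving (fun x : X => g • x) μ μ)
    (ω : G → X → H)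
    -- properness of the cocycle, witnessed by a family `𝒜` of Borel sets:
    (𝒜 : Set (Set X)) (h𝒜meas : ∀ A ∈ 𝒜, MeasurableSet A)
    (h𝒜prop : ∀ K : Set G, IsCompact K → ∀ A ∈ 𝒜, ∀ B ∈ 𝒜,
      ∃ L : Set H, IsCompact (closure L) ∧
        ∀ g ∈ K, ∀ᵐ x ∂μ, x ∈ A ∩ (fun x : X => g • x) ⁻¹' B → ω g x ∈ L)
    (h𝒜large : ∀ ε > (0 : ℝ), ∃ A ∈ 𝒜, μ Aᶜ < ENNReal.ofReal ε)
    (π : H →* (𝓗 ≃ₗᵢ[ℂ] 𝓗))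
    (hai : ∀ L : Set H, IsCompact L → ∀ ε > (0 : ℝ),
      ∃ ξ : 𝓗, ‖ξ‖ = 1 ∧ ∀ h ∈ L, ‖π h ξ - ξ‖ < ε) :
    ∀ K : Set G, IsCompact K → ∀ ε > (0 : ℝ),
      ∃ f : X → 𝓗, MemLp f 2 μ ∧ eLpNorm f 2 μ = 1 ∧
        ∀ g ∈ K,
          eLpNorm (fun x : X => π (ω g (g⁻¹ • x)) (f (g⁻¹ • x)) - f x) 2 μ <
            ENNReal.ofReal ε := by
  intro K hK ε hε
  obtain ⟨A, hA𝒜, hA⟩ := h𝒜large ((ε / 4) ^ 2 / 2) (by positivity)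
  obtain ⟨L, hL, hωL⟩ := h𝒜prop K hK A hA𝒜 A hA𝒜
  obtain ⟨ξ, hξ, hξL⟩ := hai (closure L) hL (ε / 2) (by positivity)
  refine ⟨fun _ => ξ, memLp_const ξ, ?_, fun g hg => ?_⟩
  · simp [eLpNorm_const ξ two_ne_zero (NeZero.ne μ), ← ofReal_norm, hξ]
  set S := (g⁻¹ • ·) ⁻¹' (A ∩ (g • ·) ⁻¹' A)
  have hS : MeasurableSet S :=
    (hmp g⁻¹).measurable ((h𝒜meas A hA𝒜).inter ((hmp g).measurable (h𝒜meas A hA𝒜)))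
  have hnear : ∀ᵐ x ∂μ, x ∈ S → ‖π (ω g (g⁻¹ • x)) ξ - ξ‖ ≤ ε / 2 := by
    filter_upwards [(hmp g⁻¹).quasiMeasurePreserving.ae (hωL g hg)] with x hx hxS
    exact (hξL _ (subset_closure (hx hxS))).le
  have hfar (x : X) : ‖π (ω g (g⁻¹ • x)) ξ - ξ‖ ≤ 2 :=
    (norm_sub_le _ _).trans (by simp [hξ]; norm_num)
  have hSc : μ Sᶜ < ENNReal.ofReal (ε / 4) ^ (2 : ℝ) :=
    calc μ Sᶜ ≤ μ (A ∩ (g • ·) ⁻¹' A)ᶜ := (hmp g⁻¹).measure_preimage_le _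
      _ ≤ 2 * μ Aᶜ := (hmp g).measure_compl_inter_preimage_le A
      _ < 2 * ENNReal.ofReal ((ε / 4) ^ 2 / 2) := by gcongr; exact ENNReal.ofNat_ne_top
      _ = ENNReal.ofReal (ε / 4) ^ (2 : ℝ) := by
        rw [ENNReal.rpow_two, ← ENNReal.ofReal_pow (by positivity), ← ENNReal.ofReal_ofNat 2,
          ← ENNReal.ofReal_mul zero_le_two]
        ring_nf
  calc _ ≤ μ univ ^ (2 : ℝ≥0∞).toReal⁻¹ * ENNReal.ofReal (ε / 2) +
        ENNReal.ofReal 2 * μ Sᶜ ^ (2 : ℝ≥0∞).toReal⁻¹ :=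
        eLpNorm_le_of_ae_bound_on_of_bound one_le_two hS (by positivity) zero_le_two hnear hfar
    _ < ENNReal.ofReal (ε / 2) + ENNReal.ofReal 2 * ENNReal.ofReal (ε / 4) := by
        rw [measure_univ, ENNReal.one_rpow, one_mul, ENNReal.toReal_ofNat]
        gcongr
        · exact ENNReal.ofReal_ne_top
        · exact ENNReal.ofReal_ne_top
        · exact (ENNReal.rpow_inv_lt_iff two_pos).2 hSc
    _ = ENNReal.ofReal ε := by
        rw [← ENNReal.ofReal_mul zero_le_two, ← ENNReal.ofReal_add (by positivity) (by positivity)]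
        ring_nf

/-- If `ω : G × X → H` is a proper strict measurable cocycle over a pmp action of `G` on a
standard Borel probability space `(X, μ)` and `π` is a strongly continuous unitary
representation of `H` with almost invariant vectors, then the induced representation
`(π̃(g)ξ)(x) = π(ω(g, g⁻¹.x))ξ(g⁻¹.x)` of `G` on `L²(X, 𝓗)` has almost invariant vectors. -/
theorem stmt_18 {G H X 𝓗 : Type*}
    [Group G] [TopologicalSpace G] [IsTopologicalGroup G]
    [LocallyCompactSpace G] [SecondCountableTopology G]
    [MeasurableSpace G] [BorelSpace G]
    [Group H] [TopologicalSpace H] [IsTopologicalGroup H]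
    [LocallyCompactSpace H] [SecondCountableTopology H]
    [MeasurableSpace H] [BorelSpace H]
    [MeasurableSpace X] [StandardBorelSpace X]
    [NormedAddCommGroup 𝓗] [InnerProductSpace ℂ 𝓗] [CompleteSpace 𝓗]
    [SecondCountableTopology 𝓗] [MeasurableSpace 𝓗] [BorelSpace 𝓗]
    (μ : Measure X) [IsProbabilityMeasure μ]
    [MulAction G X] (hact : Measurable fun p : G × X => p.1 • p.2)
    (hmp : ∀ g : G, MeasurePreserving (fun x : X => g • x) μ μ)
    (ω : G → X → H) (hω : Measurable fun p : G × X => ω p.1 p.2)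
    (hcoc : ∀ g₁ g₂ : G, ∀ x : X, ω (g₁ * g₂) x = ω g₁ (g₂ • x) * ω g₂ x)
    -- properness of the cocycle, witnessed by a family `𝒜` of Borel sets:
    (𝒜 : Set (Set X)) (h𝒜meas : ∀ A ∈ 𝒜, MeasurableSet A)
    (h𝒜prop : ∀ K : Set G, IsCompact K → ∀ A ∈ 𝒜, ∀ B ∈ 𝒜,
      ∃ L : Set H, IsCompact (closure L) ∧
        ∀ g ∈ K, ∀ᵐ x ∂μ, x ∈ A ∩ (fun x : X => g • x) ⁻¹' B → ω g x ∈ L)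
    (h𝒜large : ∀ ε > (0 : ℝ), ∃ A ∈ 𝒜, μ Aᶜ < ENNReal.ofReal ε)
    (π : H →* (𝓗 ≃ₗᵢ[ℂ] 𝓗))
    (hπcont : ∀ ξ : 𝓗, Continuous fun h : H => π h ξ)
    (hai : ∀ L : Set H, IsCompact L → ∀ ε > (0 : ℝ),
      ∃ ξ : 𝓗, ‖ξ‖ = 1 ∧ ∀ h ∈ L, ‖π h ξ - ξ‖ < ε) :
    ∀ K : Set G, IsCompact K → ∀ ε > (0 : ℝ),
      ∃ f : X → 𝓗, MemLp f 2 μ ∧ eLpNorm f 2 μ = 1 ∧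
        ∀ g ∈ K,
          eLpNorm (fun x : X => π (ω g (g⁻¹ • x)) (f (g⁻¹ • x)) - f x) 2 μ <
            ENNReal.ofReal ε :=
  stmt_18_general μ hmp ω 𝒜 h𝒜meas h𝒜prop h𝒜large π hai
end
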